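/- For any r, s ∈ ℝ, any n ∈ ℕ, and any x ∈ ℝ: g_{r,n}(x) = Σ_{k=0}^{n} C(n,k) · g_{r,k}(s) · g_{s,n−k}(x) (generalized binomial theorem for g-monomials). -/

import Mathlib

open MeasureTheory Set Finset

/-- The jump of `g` at `x`: `Δg(x) = g(x⁺) − g(x)`. -/
noncomputable def jumpOf (g : ℝ → ℝ) (x : ℝ) : ℝ := Function.rightLim g x - g x

/-- Oriented Lebesgue–Stieltjes integral: `∫_a^b f dμ = ∫_{[a,b)} f dμ` if `a ≤ b`,
`= −∫_{[b,a)} f dμ` otherwise. -/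
noncomputable def ointeg (μ : MeasureTheory.Measure ℝ) (f : ℝ → ℝ) (a b : ℝ) : ℝ :=
  if a ≤ b then ∫ s in Set.Ico a b, f s ∂μ else - ∫ s in Set.Ico b a, f s ∂μ

/-- The `g`-monomials centered at `c`, defined from the Lebesgue–Stieltjes measure `μ` of `g`:
`g_0 ≡ 1`, `g_{n+1}(x) = (n+1) ∫_c^x g_n dμ` (oriented). -/
noncomputable def gMon (μ : MeasureTheory.Measure ℝ) (c : ℝ) : ℕ → ℝ → ℝ
  | 0 => fun _ => 1
  | n + 1 => fun x => ((n : ℝ) + 1) * ointeg μ (gMon μ c n) c x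

/-!
Induction on `n`. Split `∫_r^x g_{r,n} dμ = ∫_r^s + ∫_s^x`; the first piece is
`g_{r,n+1}(s)/(n+1)`, and in the second one expand `g_{r,n}` by the induction hypothesis and
integrate term by term, using `(n+1) C(n,k) = C(n+1,k) (n+1-k)`. All integrals make sense
because every `g`-monomial is locally integrable: `x ↦ ∫_c^x f dμ` is a difference of two
monotone functions, `∫_c^x f⁺ dμ` and `∫_c^x f⁻ dμ`.
-/

section LocallyIntegrable

variable {X : Type*} [TopologicalSpace X] [MeasurableSpace X] {ν : Measure X} {f : X → ℝ}

theorem MeasureTheory.LocallyIntegrable.pos_part (hf : LocallyIntegrable f ν) :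
    LocallyIntegrable (fun t => max (f t) 0) ν := fun x =>
  let ⟨s, hs, hfs⟩ := hf x
  ⟨s, hs, hfs.pos_part⟩

theorem MeasureTheory.LocallyIntegrable.const_mul (hf : LocallyIntegrable f ν) (c : ℝ) :
    LocallyIntegrable (fun t => c * f t) ν :=
  hf.smul c

end LocallyIntegrable

variable {μ : Measure ℝ}

theorem isLocallyFiniteMeasure_of_measure_Ico_lt_top (h : ∀ a b : ℝ, μ (Ico a b) < ⊤) :
    IsLocallyFiniteMeasure μ :=
  ⟨fun x => ⟨Ioo (x - 1) (x + 1), Ioo_mem_nhds (by linarith) (by linarith),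
    (measure_mono Set.Ioo_subset_Ico_self).trans_lt (h _ _)⟩⟩

theorem MeasureTheory.LocallyIntegrable.integrableOn_Ico {f : ℝ → ℝ} (hf : LocallyIntegrable f μ)
    (a b : ℝ) : IntegrableOn f (Ico a b) μ :=
  (hf.integrableOn_isCompact isCompact_Icc).mono_set Ico_subset_Icc_self

namespace ointeg

theorem swap (f : ℝ → ℝ) (a b : ℝ) : ointeg μ f a b = -ointeg μ f b a := by
  rcases lt_trichotomy a b with h | rfl | h
  · rw [ointeg, ointeg, if_pos h.le, if_neg (not_le.2 h), neg_neg]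
  · simp [ointeg]
  · rw [ointeg, ointeg, if_neg (not_le.2 h), if_pos h.le]

theorem eq_sub_of_le {f : ℝ → ℝ} (hf : LocallyIntegrable f μ) {m a b : ℝ}
    (ha : m ≤ a) (hb : m ≤ b) :
    ointeg μ f a b = ∫ t in Ico m b, f t ∂μ - ∫ t in Ico m a, f t ∂μ := by
  have split : ∀ {u v : ℝ}, m ≤ u → u ≤ v →
      ∫ t in Ico m v, f t ∂μ = ∫ t in Ico m u, f t ∂μ + ∫ t in Ico u v, f t ∂μ :=
    fun hu huv => by
      rw [← Ico_union_Ico_eq_Ico hu huv, setIntegral_union Ico_disjoint_Ico_same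
        measurableSet_Ico (hf.integrableOn_Ico _ _) (hf.integrableOn_Ico _ _)]
  rcases le_total a b with h | h
  · rw [ointeg, if_pos h, split ha h]; ring
  · rw [swap, ointeg, if_pos h, split hb h]; ring

theorem add {f : ℝ → ℝ} (hf : LocallyIntegrable f μ) (a b c : ℝ) :
    ointeg μ f a b + ointeg μ f b c = ointeg μ f a c := by
  have ha : min a (min b c) ≤ a := min_le_left _ _
  have hb : min a (min b c) ≤ b := (min_le_right _ _).trans (min_le_left _ _)
  have hc : min a (min b c) ≤ c := (min_le_right _ _).trans (min_le_right _ _)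
  rw [eq_sub_of_le hf ha hb, eq_sub_of_le hf hb hc, eq_sub_of_le hf ha hc]
  ring

theorem sub {f g : ℝ → ℝ} (hf : LocallyIntegrable f μ) (hg : LocallyIntegrable g μ) (a b : ℝ) :
    ointeg μ (fun t => f t - g t) a b = ointeg μ f a b - ointeg μ g a b := by
  simp only [ointeg]
  split_ifs
  · exact integral_sub (hf.integrableOn_Ico _ _) (hg.integrableOn_Ico _ _)
  · rw [integral_sub (hf.integrableOn_Ico _ _) (hg.integrableOn_Ico _ _)]; ring

theorem finset_sum {ι : Type*} (s : Finset ι) {F : ι → ℝ → ℝ}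
    (hF : ∀ i ∈ s, LocallyIntegrable (F i) μ) (a b : ℝ) :
    ointeg μ (fun x => ∑ i ∈ s, F i x) a b = ∑ i ∈ s, ointeg μ (F i) a b := by
  simp only [ointeg]
  split_ifs
  · exact integral_finsetSum s fun i hi => (hF i hi).integrableOn_Ico _ _
  · rw [integral_finsetSum s fun i hi => (hF i hi).integrableOn_Ico _ _, sum_neg_distrib]

theorem const_mul (r : ℝ) (f : ℝ → ℝ) (a b : ℝ) :
    ointeg μ (fun t => r * f t) a b = r * ointeg μ f a b := by
  simp only [ointeg]
  split_ifs
  · exact integral_const_mul r f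
  · rw [integral_const_mul]; ring

theorem monotone_of_nonneg {f : ℝ → ℝ} (hf : LocallyIntegrable f μ) (hf0 : 0 ≤ f) (c : ℝ) :
    Monotone (ointeg μ f c) := by
  intro x y hxy
  have hxy' : 0 ≤ ointeg μ f x y := by
    rw [ointeg, if_pos hxy]
    exact setIntegral_nonneg measurableSet_Ico fun t _ => hf0 t
  linarith [add hf c x y]

theorem locallyIntegrable [IsLocallyFiniteMeasure μ] {f : ℝ → ℝ} (hf : LocallyIntegrable f μ)
    (c : ℝ) : LocallyIntegrable (ointeg μ f c) μ := by
  have hpos : LocallyIntegrable (fun t => max (f t) 0) μ := hf.pos_part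
  have hneg : LocallyIntegrable (fun t => max (-f t) 0) μ := hf.neg.pos_part
  have hdecomp : ointeg μ f c =
      fun x => ointeg μ (fun t => max (f t) 0) c x - ointeg μ (fun t => max (-f t) 0) c x := by
    funext x
    rw [← sub hpos hneg]
    congr 1
    funext t
    rcases le_total 0 (f t) with h | h
    · rw [max_eq_left h, max_eq_right (neg_nonpos.2 h), sub_zero]
    · rw [max_eq_right h, max_eq_left (neg_nonneg.2 h), zero_sub, neg_neg]
  rw [hdecomp]
  exact ((monotone_of_nonneg hpos (fun t => le_max_right _ _) c).locallyIntegrable).sub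
    ((monotone_of_nonneg hneg (fun t => le_max_right _ _) c).locallyIntegrable)

end ointeg

theorem gMon_zero (c x : ℝ) : gMon μ c 0 x = 1 := rfl

theorem gMon_succ (c : ℝ) (n : ℕ) (x : ℝ) :
    gMon μ c (n + 1) x = ((n : ℝ) + 1) * ointeg μ (gMon μ c n) c x := rfl

theorem locallyIntegrable_gMon [IsLocallyFiniteMeasure μ] (c : ℝ) (n : ℕ) :
    LocallyIntegrable (gMon μ c n) μ := by
  induction n with
  | zero => exact locallyIntegrable_const 1
  | succ n ih => exact (ointeg.locallyIntegrable ih c).const_mul _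

theorem gMon_eq_sum_choose_mul [IsLocallyFiniteMeasure μ] (r s x : ℝ) (n : ℕ) :
    gMon μ r n x = ∑ k ∈ range (n + 1), (n.choose k : ℝ) * gMon μ r k s * gMon μ s (n - k) x := by
  induction n generalizing x with
  | zero => simp [gMon_zero]
  | succ n ih =>
    have hsplit : ointeg μ (gMon μ r n) s x = ∑ k ∈ range (n + 1),
        (n.choose k : ℝ) * gMon μ r k s * ointeg μ (gMon μ s (n - k)) s x := by
      rw [show gMon μ r n = _ from funext ih, ointeg.finset_sum _ fun k _ =>
        (locallyIntegrable_gMon s (n - k)).const_mul _]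
      exact sum_congr rfl fun k _ => ointeg.const_mul _ _ s x
    have hterm : ∀ k ∈ range (n + 1),
        ((n : ℝ) + 1) * ((n.choose k : ℝ) * gMon μ r k s * ointeg μ (gMon μ s (n - k)) s x)
          = ((n + 1).choose k : ℝ) * gMon μ r k s * gMon μ s (n + 1 - k) x := by
      intro k hk
      have hkn : k ≤ n := Nat.lt_succ_iff.mp (mem_range.mp hk)
      have hchoose : (n.choose k : ℝ) * (n + 1) = ((n + 1).choose k : ℝ) * ((n - k : ℕ) + 1) := by
        exact_mod_cast (Nat.choose_mul_succ_eq n k).trans (by rw [Nat.sub_add_comm hkn])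
      rw [Nat.sub_add_comm hkn, gMon_succ]
      linear_combination gMon μ r k s * ointeg μ (gMon μ s (n - k)) s x * hchoose
    rw [gMon_succ, ← ointeg.add (locallyIntegrable_gMon r n) r s x, mul_add, hsplit, mul_sum,
      sum_congr rfl hterm, sum_range_succ _ (n + 1), gMon_succ r n s]
    simp [gMon_zero, add_comm]

theorem stmt7_general (g : ℝ → ℝ) (μ : MeasureTheory.Measure ℝ)
    (hμ : ∀ a b : ℝ, a ≤ b → μ (Set.Ico a b) = ENNReal.ofReal (g b - g a)) :
    ∀ r s x : ℝ, ∀ n : ℕ,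
      gMon μ r n x = ∑ k ∈ Finset.range (n + 1),
        (n.choose k : ℝ) * gMon μ r k s * gMon μ s (n - k) x := by
  have : IsLocallyFiniteMeasure μ := isLocallyFiniteMeasure_of_measure_Ico_lt_top fun a b => by
    rcases le_total a b with h | h
    · rw [hμ a b h]; exact ENNReal.ofReal_lt_top
    · simp [Ico_eq_empty (not_lt.2 h)]
  exact gMon_eq_sum_choose_mul

/-- Generalized binomial theorem for `g`-monomials: for all centers `r, s`, all `n` and `x`,
`g_{r,n}(x) = Σ_{k=0}^{n} C(n,k) g_{r,k}(s) g_{s,n−k}(x)`. -/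
theorem stmt7 (g : ℝ → ℝ) (μ : MeasureTheory.Measure ℝ)
    (hg : Monotone g) (hlc : ∀ x : ℝ, ContinuousWithinAt g (Set.Iio x) x)
    (hμ : ∀ a b : ℝ, a ≤ b → μ (Set.Ico a b) = ENNReal.ofReal (g b - g a)) :
    ∀ r s x : ℝ, ∀ n : ℕ,
      gMon μ r n x = ∑ k ∈ Finset.range (n + 1),
        (n.choose k : ℝ) * gMon μ r k s * gMon μ s (n - k) x :=
  stmt7_general g μ hμ
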